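/- Let (C,α,x) be an elusive triple in H(m,q) where the code C has minimum distance δ ≥ 3, and let π, π' be distinct (C,α,x)-associates. Then 1 ≤ MC(π,π') ≤ 3. -/

import Mathlib

variable {M Q : Type*}

/-- The set of entries in which two vertices of the Hamming graph differ. -/
def diffSet [Fintype M] [DecidableEq Q] (α β : M → Q) : Finset M :=
  Finset.univ.filter fun i => α i ≠ β i

/-- `GammaSet α r` is the set of vertices at Hamming distance exactly `r` from `α`. -/
def GammaSet [Fintype M] [DecidableEq Q] (α : M → Q) (r : ℕ) : Set (M → Q) :=
  {β | hammingDist α β = r}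

/-- The neighbour set `C₁` of a code `C`. -/
def neighbourSet [Fintype M] [DecidableEq Q] (C : Set (M → Q)) : Set (M → Q) :=
  {ν | ν ∉ C ∧ ∃ c ∈ C, hammingDist ν c = 1}

/-- An automorphism of the Hamming graph: a bijection of vertices preserving Hamming distance. -/
def IsAut [Fintype M] [DecidableEq Q] (x : (M → Q) ≃ (M → Q)) : Prop :=
  ∀ a b, hammingDist (x a) (x b) = hammingDist a b

/-- An elusive triple `(C, α, x)`. -/
def IsElusiveTriple [Fintype M] [DecidableEq Q] (C : Set (M → Q)) (α : M → Q)
    (x : (M → Q) ≃ (M → Q)) : Prop :=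
  IsAut x ∧ x '' neighbourSet C = neighbourSet C ∧ α ∈ C ∧ x α ∉ C

/-- A `(C,α,x)`-associate: a vertex in `Γ₂(α) ∩ C^x`. -/
def IsAssociate [Fintype M] [DecidableEq Q] (C : Set (M → Q)) (α : M → Q)
    (x : (M → Q) ≃ (M → Q)) (π : M → Q) : Prop :=
  π ∈ GammaSet α 2 ∧ π ∈ x '' C

/-- `MC C π π' = |C ∩ Γ₂(π) ∩ Γ₂(π')|`, the number of mutual codewords. -/
noncomputable def MC [Fintype M] [DecidableEq Q] (C : Set (M → Q)) (π π' : M → Q) : ℕ :=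
  (C ∩ GammaSet π 2 ∩ GammaSet π' 2).ncard

/-- The code `C` has minimum distance `δ`. -/
def HasMinDist [Fintype M] [DecidableEq Q] (C : Set (M → Q)) (δ : ℕ) : Prop :=
  IsLeast {d : ℕ | ∃ a ∈ C, ∃ b ∈ C, a ≠ b ∧ hammingDist a b = d} δ

/-- `IsCodeDist C β k` says that `d(β, C) = k`. -/
def IsCodeDist [Fintype M] [DecidableEq Q] (C : Set (M → Q)) (β : M → Q) (k : ℕ) : Prop :=
  IsLeast {d : ℕ | ∃ γ ∈ C, hammingDist β γ = d} k

/-- `update2 α i j a b` is the vertex `γ(α|i,j|a,b)`. -/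
def update2 [DecidableEq M] (α : M → Q) (i j : M) (a b : Q) : M → Q :=
  Function.update (Function.update α i a) j b

/-- `update3 α i j k a b c` is the vertex `γ(α|i,j,k|a,b,c)`. -/
def update3 [DecidableEq M] (α : M → Q) (i j k : M) (a b c : Q) : M → Q :=
  Function.update (Function.update (Function.update α i a) j b) k c

/-!
Both associates lie in `C^x`, so `d(π, π') ≥ 3`, while any `β ∈ C ∩ Γ₂(π) ∩ Γ₂(π')` gives
`d(π, π') ≤ 4`. The set `S_β` of entries where `β` differs from `π` is a 2-subset of the
set `D` of entries where `π` and `π'` differ, and `β ↦ S_β` is injective on the code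
because distinct codewords are at distance at least `3`. If `|D| = 3` there are only three
2-subsets of `D`. If `|D| = 4`, then `β` is a midpoint of `π` and `π'`, so `β` agrees with
`π'` on `S_β`; two codewords whose sets `S_β` meet would then be at distance at most `2`,
so the sets `S_β` are disjoint and there are at most two of them. The codeword `α` itself
gives the lower bound.
-/

section DiffSet

variable [Fintype M] [DecidableEq M] [DecidableEq Q]

omit [DecidableEq M] in
theorem mem_diffSet {a b : M → Q} {i : M} : i ∈ diffSet a b ↔ a i ≠ b i := by
  simp [diffSet]

omit [DecidableEq M] in
theorem card_diffSet (a b : M → Q) : (diffSet a b).card = hammingDist a b := rfl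

theorem diffSet_subset_union (a b c : M → Q) :
    diffSet b c ⊆ diffSet a b ∪ diffSet a c := by
  intro i hi
  rw [Finset.mem_union, mem_diffSet, mem_diffSet]
  by_contra! h
  exact mem_diffSet.mp hi (h.1.symm.trans h.2)

theorem hammingDist_lt_add_of_ne_of_ne {a b c : M → Q} {i : M} (hb : a i ≠ b i)
    (hc : a i ≠ c i) : hammingDist b c < hammingDist a b + hammingDist a c := by
  have hinter : 0 < (diffSet a b ∩ diffSet a c).card :=
    Finset.card_pos.mpr ⟨i, Finset.mem_inter.mpr ⟨mem_diffSet.mpr hb, mem_diffSet.mpr hc⟩⟩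
  have hunion := Finset.card_union_add_card_inter (diffSet a b) (diffSet a c)
  have hle := Finset.card_le_card (diffSet_subset_union a b c)
  simp only [card_diffSet] at hunion hle
  omega

theorem hammingDist_add_two_le_of_ne_of_ne_of_eq {a b c : M → Q} {i : M} (hb : a i ≠ b i)
    (hc : a i ≠ c i) (hbc : b i = c i) :
    hammingDist b c + 2 ≤ hammingDist a b + hammingDist a c := by
  have hinter : 0 < (diffSet a b ∩ diffSet a c).card :=
    Finset.card_pos.mpr ⟨i, Finset.mem_inter.mpr ⟨mem_diffSet.mpr hb, mem_diffSet.mpr hc⟩⟩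
  have hsub : diffSet b c ⊆ (diffSet a b ∪ diffSet a c).erase i :=
    Finset.subset_erase.mpr ⟨diffSet_subset_union a b c, fun h => mem_diffSet.mp h hbc⟩
  have hunion := Finset.card_union_add_card_inter (diffSet a b) (diffSet a c)
  have hle := Finset.card_le_card hsub
  have herase :=
    Finset.card_erase_add_one (Finset.mem_union_left (diffSet a c) (mem_diffSet.mpr hb))
  simp only [card_diffSet] at hunion hle
  omega

theorem hammingDist_le_of_diffSet_eq {a b c : M → Q} (h : diffSet a b = diffSet a c) :
    hammingDist b c ≤ hammingDist a b := by
  have hsub := diffSet_subset_union a b c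
  rw [← h, Finset.union_self] at hsub
  exact Finset.card_le_card hsub

end DiffSet

section MutualNeighbours

variable [Fintype M] [DecidableEq M] [DecidableEq Q] {π π' : M → Q} {X : Finset (M → Q)}

theorem diffSet_subset_diffSet_of_hammingDist_eq_two {β : M → Q}
    (hd : 3 ≤ hammingDist π π') (hβ : hammingDist π β = 2) (hβ' : hammingDist π' β = 2) :
    diffSet π β ⊆ diffSet π π' := by
  intro i hi
  rw [mem_diffSet] at hi ⊢
  intro hii
  have := hammingDist_add_two_le_of_ne_of_ne_of_eq (a := β) (Ne.symm hi)
    (by rw [← hii]; exact Ne.symm hi) hii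
  rw [hammingDist_comm β π, hammingDist_comm β π'] at this
  omega

theorem card_le_three_of_hammingDist_eq_three (hd : hammingDist π π' = 3)
    (hX : ∀ β ∈ X, hammingDist π β = 2 ∧ hammingDist π' β = 2)
    (hsep : ∀ β ∈ X, ∀ γ ∈ X, β ≠ γ → 3 ≤ hammingDist β γ) : X.card ≤ 3 := by
  have hmaps : Set.MapsTo (diffSet π) X ((diffSet π π').powersetCard 2) := fun β hβ =>
    Finset.mem_powersetCard.mpr ⟨diffSet_subset_diffSet_of_hammingDist_eq_two hd.ge
      (hX β hβ).1 (hX β hβ).2, (hX β hβ).1⟩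
  have hinj : Set.InjOn (diffSet π) X := fun β hβ γ hγ h => by
    by_contra hne
    have := hammingDist_le_of_diffSet_eq h
    have := hsep β hβ γ hγ hne
    have := (hX β hβ).1
    omega
  calc X.card ≤ ((diffSet π π').powersetCard 2).card := Finset.card_le_card_of_injOn _ hmaps hinj
    _ = 3 := by rw [Finset.card_powersetCard, card_diffSet, hd]; rfl

theorem card_le_two_of_hammingDist_eq_four (hd : hammingDist π π' = 4)
    (hX : ∀ β ∈ X, hammingDist π β = 2 ∧ hammingDist π' β = 2)
    (hsep : ∀ β ∈ X, ∀ γ ∈ X, β ≠ γ → 3 ≤ hammingDist β γ) : X.card ≤ 2 := by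
  have hmid : ∀ β ∈ X, ∀ i ∈ diffSet π β, β i = π' i := fun β hβ i hi => by
    by_contra h
    have := hammingDist_lt_add_of_ne_of_ne (a := β) (Ne.symm (mem_diffSet.mp hi)) h
    rw [hammingDist_comm β π, hammingDist_comm β π', (hX β hβ).1, (hX β hβ).2] at this
    omega
  have hdisj : (X : Set (M → Q)).PairwiseDisjoint (diffSet π) := fun β hβ γ hγ hne => by
    rw [Function.onFun, Finset.disjoint_left]
    intro i hiβ hiγ
    have := hammingDist_add_two_le_of_ne_of_ne_of_eq (mem_diffSet.mp hiβ) (mem_diffSet.mp hiγ)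
      ((hmid β hβ i hiβ).trans (hmid γ hγ i hiγ).symm)
    rw [(hX β hβ).1, (hX γ hγ).1] at this
    have := hsep β hβ γ hγ hne
    omega
  have hcover : X.biUnion (diffSet π) ⊆ diffSet π π' := Finset.biUnion_subset.mpr fun β hβ =>
    diffSet_subset_diffSet_of_hammingDist_eq_two (by omega) (hX β hβ).1 (hX β hβ).2
  have : 2 * X.card ≤ 4 :=
    calc 2 * X.card = ∑ β ∈ X, (diffSet π β).card := by
          rw [Finset.sum_congr rfl fun β hβ => (card_diffSet π β).trans (hX β hβ).1,
            Finset.sum_const, smul_eq_mul, mul_comm]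
      _ = (X.biUnion (diffSet π)).card := (Finset.card_biUnion hdisj).symm
      _ ≤ (diffSet π π').card := Finset.card_le_card hcover
      _ = 4 := hd
  omega

theorem card_le_three_of_forall_hammingDist_eq_two (hd : 3 ≤ hammingDist π π')
    (hX : ∀ β ∈ X, hammingDist π β = 2 ∧ hammingDist π' β = 2)
    (hsep : ∀ β ∈ X, ∀ γ ∈ X, β ≠ γ → 3 ≤ hammingDist β γ) : X.card ≤ 3 := by
  obtain rfl | ⟨β, hβ⟩ := X.eq_empty_or_nonempty
  · simp
  have hd_le : hammingDist π π' ≤ 4 := by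
    have := hammingDist_triangle π β π'
    rw [hammingDist_comm β π', (hX β hβ).1, (hX β hβ).2] at this
    exact this
  obtain hd3 | hd4 : hammingDist π π' = 3 ∨ hammingDist π π' = 4 := by omega
  · exact card_le_three_of_hammingDist_eq_three hd3 hX hsep
  · exact (card_le_two_of_hammingDist_eq_four hd4 hX hsep).trans (by norm_num)

end MutualNeighbours

/-- For an elusive triple with minimum distance `δ ≥ 3` and distinct
associates `π, π'`, we have `1 ≤ MC(π,π') ≤ 3`. -/
theorem stmt_8 (m q : ℕ) (C : Set (Fin m → Fin q)) (α : Fin m → Fin q)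
    (x : (Fin m → Fin q) ≃ (Fin m → Fin q))
    (hET : IsElusiveTriple C α x) (hδ : ∃ δ : ℕ, 3 ≤ δ ∧ HasMinDist C δ)
    (π π' : Fin m → Fin q)
    (hπ : IsAssociate C α x π) (hπ' : IsAssociate C α x π') (hne : π ≠ π') :
    1 ≤ MC C π π' ∧ MC C π π' ≤ 3 := by
  classical
  obtain ⟨δ, hδ3, hmin⟩ := hδ
  obtain ⟨hx, -, hαC, -⟩ := hET
  obtain ⟨hπα, γ, hγC, rfl⟩ := hπ
  obtain ⟨hπ'α, γ', hγ'C, rfl⟩ := hπ'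
  have hsep : ∀ β ∈ C, ∀ β' ∈ C, β ≠ β' → 3 ≤ hammingDist β β' := fun β hβ β' hβ' hne =>
    hδ3.trans (hmin.2 ⟨β, hβ, β', hβ', hne, rfl⟩)
  have hd : 3 ≤ hammingDist (x γ) (x γ') :=
    (hx γ γ').symm ▸ hsep γ hγC γ' hγ'C (ne_of_apply_ne x hne)
  have hαX : α ∈ C ∩ GammaSet (x γ) 2 ∩ GammaSet (x γ') 2 :=
    ⟨⟨hαC, (hammingDist_comm _ _).trans hπα⟩, (hammingDist_comm _ _).trans hπ'α⟩
  refine ⟨(Set.ncard_pos (Set.toFinite _)).mpr ⟨α, hαX⟩, ?_⟩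
  rw [MC, Set.ncard_eq_toFinset_card']
  refine card_le_three_of_forall_hammingDist_eq_two hd (fun β hβ => ?_) fun β hβ β' hβ' => ?_
  · obtain ⟨⟨-, hβπ⟩, hβπ'⟩ := Set.mem_toFinset.mp hβ
    exact ⟨hβπ, hβπ'⟩
  · exact hsep β (Set.mem_toFinset.mp hβ).1.1 β' (Set.mem_toFinset.mp hβ').1.1
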